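/- There exist positive constants K and C such that for every finite simple graph G with at least one edge, pw(G) ≤ K·dc(G) + C; in fact, any graph with dilation coefficient D has chromatic number at most (⌈√2·D⌉+1)². -/

import Mathlib

/-!
Scale an optimal representation (the infimum defining `dc G` is attained, by compactness)
so that edge lengths lie in `[1, D]`, `D = dc G`. Tile the plane by half-open squares of side
`1 / √2` and colour a square by its position modulo `t = ⌈√2 D⌉ + 1` in each coordinate: two
points in one square are closer than `1`, two points in distinct squares of the same colour are
farther apart than `(t - 1) / √2 ≥ D`, so no edge is monochromatic and `χ(G) ≤ t²`. Placing the
colour classes at the points of a `t × t` unit grid gives `pw G ≤ √2 (t - 1) ≤ 2 D + 2`.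
-/

open Real

noncomputable section

/-- The Euclidean plane. -/
abbrev Pt := EuclideanSpace ℝ (Fin 2)

variable {V : Type*} [Fintype V]

/-- A representation is non-edge-degenerate if endpoints of every edge are mapped
to distinct points. -/
def NED (G : SimpleGraph V) (ρ : V → Pt) : Prop := ∀ ⦃u v⦄, G.Adj u v → ρ u ≠ ρ v

/-- Maximum edge length of a representation. -/
def maxE (G : SimpleGraph V) (ρ : V → Pt) : ℝ :=
  sSup {d | ∃ u v, G.Adj u v ∧ d = dist (ρ u) (ρ v)}

/-- Minimum edge length of a representation. -/
def minE (G : SimpleGraph V) (ρ : V → Pt) : ℝ :=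
  sInf {d | ∃ u v, G.Adj u v ∧ d = dist (ρ u) (ρ v)}

/-- Maximum distance between images of two distinct vertices. -/
def maxP (ρ : V → Pt) : ℝ := sSup {d | ∃ u v : V, u ≠ v ∧ d = dist (ρ u) (ρ v)}

/-- Minimum distance between images of two distinct vertices. -/
def minP (ρ : V → Pt) : ℝ := sInf {d | ∃ u v : V, u ≠ v ∧ d = dist (ρ u) (ρ v)}

/-- The dilation coefficient of a graph. -/
def dc (G : SimpleGraph V) : ℝ :=
  sInf {r | ∃ ρ : V → Pt, NED G ρ ∧ r = maxE G ρ / minE G ρ}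

/-- The plane-width of a graph. -/
def pw (G : SimpleGraph V) : ℝ :=
  sInf {r | ∃ ρ : V → Pt, NED G ρ ∧ r = maxP ρ / minE G ρ}

/-- The resolution coefficient of a graph. -/
def re (G : SimpleGraph V) : ℝ :=
  sInf {r | ∃ ρ : V → Pt, Function.Injective ρ ∧ r = maxE G ρ / minP ρ}

end

section EdgeLengths

variable {V : Type*} {G : SimpleGraph V} {ρ : V → Pt}

variable (G ρ) in
lemma finite_setOf_edge_dist [Finite V] :
    {d | ∃ u v, G.Adj u v ∧ d = dist (ρ u) (ρ v)}.Finite :=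
  (Set.finite_range fun p : V × V => dist (ρ p.1) (ρ p.2)).subset
    fun _ ⟨u, v, _, hd⟩ => ⟨(u, v), hd.symm⟩

lemma dist_le_maxE [Finite V] {u v : V} (h : G.Adj u v) : dist (ρ u) (ρ v) ≤ maxE G ρ :=
  le_csSup (finite_setOf_edge_dist G ρ).bddAbove ⟨u, v, h, rfl⟩

lemma minE_le_dist [Finite V] {u v : V} (h : G.Adj u v) : minE G ρ ≤ dist (ρ u) (ρ v) :=
  csInf_le (finite_setOf_edge_dist G ρ).bddBelow ⟨u, v, h, rfl⟩

lemma maxE_nonneg : 0 ≤ maxE G ρ :=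
  Real.sSup_nonneg fun _ ⟨_, _, _, hd⟩ => hd ▸ dist_nonneg

lemma minE_nonneg : 0 ≤ minE G ρ :=
  Real.sInf_nonneg fun _ ⟨_, _, _, hd⟩ => hd ▸ dist_nonneg

variable (ρ) in
lemma nonempty_setOf_edge_dist (hE : G.edgeSet.Nonempty) :
    {d | ∃ u v, G.Adj u v ∧ d = dist (ρ u) (ρ v)}.Nonempty := by
  obtain ⟨e, he⟩ := hE
  induction e using Sym2.ind with
  | _ u v => exact ⟨_, u, v, he, rfl⟩

lemma minE_pos [Finite V] (hρ : NED G ρ) (hE : G.edgeSet.Nonempty) : 0 < minE G ρ := by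
  obtain ⟨u, v, h, hd⟩ :=
    (nonempty_setOf_edge_dist ρ hE).csInf_mem (finite_setOf_edge_dist G ρ)
  rw [minE, hd]
  exact dist_pos.2 (hρ h)

lemma maxP_nonneg : 0 ≤ maxP ρ :=
  Real.sSup_nonneg fun _ ⟨_, _, _, hd⟩ => hd ▸ dist_nonneg

lemma maxP_le {r : ℝ} (hr : 0 ≤ r) (h : ∀ u v, dist (ρ u) (ρ v) ≤ r) : maxP ρ ≤ r :=
  Real.sSup_le (fun _ ⟨u, v, _, hd⟩ => hd ▸ h u v) hr

lemma dist_le_length_mul_maxE [Finite V] {u v : V} (p : G.Walk u v) :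
    dist (ρ u) (ρ v) ≤ p.length * maxE G ρ := by
  induction p with
  | nil => simp
  | @cons a b c h p ih =>
    calc dist (ρ a) (ρ c) ≤ dist (ρ a) (ρ b) + dist (ρ b) (ρ c) := dist_triangle _ _ _
      _ ≤ maxE G ρ + p.length * maxE G ρ := add_le_add (dist_le_maxE h) ih
      _ = (p.cons h).length * maxE G ρ := by
        rw [SimpleGraph.Walk.length_cons]; push_cast; ring

lemma dist_le_card_mul_maxE [Fintype V] {u v : V} (h : G.Reachable u v) :
    dist (ρ u) (ρ v) ≤ Fintype.card V * maxE G ρ := by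
  classical
  obtain ⟨p⟩ := h
  calc dist (ρ u) (ρ v) ≤ p.toPath.val.length * maxE G ρ := dist_le_length_mul_maxE _
    _ ≤ Fintype.card V * maxE G ρ := by
      gcongr
      · exact maxE_nonneg
      · exact p.toPath.property.length_lt.le

end EdgeLengths

section Normalization

variable {V : Type*} {G : SimpleGraph V}

def normalizedReps (G : SimpleGraph V) (R c : ℝ) : Set (V → Pt) :=
  {τ | (∀ v, ‖τ v‖ ≤ R) ∧ ∀ u v, G.Adj u v → 1 ≤ dist (τ u) (τ v) ∧ dist (τ u) (τ v) ≤ c}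

lemma normalizedReps_mono {R R' c c' : ℝ} (hR : R ≤ R') (hc : c ≤ c') :
    normalizedReps G R c ⊆ normalizedReps G R' c' :=
  fun _ ⟨hb, he⟩ =>
    ⟨fun v => (hb v).trans hR, fun u v h => ⟨(he u v h).1, (he u v h).2.trans hc⟩⟩

lemma isClosed_normalizedReps (R c : ℝ) : IsClosed (normalizedReps G R c) := by
  simp only [normalizedReps, Set.ofPred_and, Set.ofPred_forall]
  exact (isClosed_iInter fun v => isClosed_le (by fun_prop) continuous_const).inter
    (isClosed_iInter fun u => isClosed_iInter fun v => isClosed_iInter fun _ =>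
      (isClosed_le continuous_const (by fun_prop)).inter
        (isClosed_le (by fun_prop) continuous_const))

lemma isCompact_normalizedReps (R c : ℝ) : IsCompact (normalizedReps G R c) :=
  (isCompact_univ_pi fun _ => isCompact_closedBall (0 : Pt) R).of_isClosed_subset
    (isClosed_normalizedReps R c)
    fun _ hτ => Set.mem_univ_pi.2 fun v => mem_closedBall_zero_iff.2 (hτ.1 v)

/-- Each connected component is translated separately, so that one of its vertices sits at
the origin; a component has diameter at most `card V * maxE G ρ`. -/
lemma exists_mem_normalizedReps [Fintype V] {ρ : V → Pt} (hρ : NED G ρ)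
    (hE : G.edgeSet.Nonempty) :
    (normalizedReps G (Fintype.card V * (maxE G ρ / minE G ρ))
      (maxE G ρ / minE G ρ)).Nonempty := by
  set m := minE G ρ
  have hm : 0 < m := minE_pos hρ hE
  let root : V → V := fun v => (G.connectedComponentMk v).out
  have hroot : ∀ {u v}, G.Adj u v → root u = root v := fun h => by
    simp only [root, SimpleGraph.ConnectedComponent.connectedComponentMk_eq_of_adj h]
  have hreach : ∀ v, G.Reachable v (root v) := fun v =>
    SimpleGraph.ConnectedComponent.exact (Quot.out_eq _).symm
  have hnorm : ∀ v, ‖m⁻¹ • (ρ v - ρ (root v))‖ = m⁻¹ * dist (ρ v) (ρ (root v)) := fun v => by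
    rw [norm_smul, norm_inv, Real.norm_of_nonneg hm.le, dist_eq_norm]
  refine ⟨fun v => m⁻¹ • (ρ v - ρ (root v)), fun v => ?_, fun u v h => ?_⟩
  · rw [hnorm, mul_div_assoc', mul_comm, ← div_eq_mul_inv]
    gcongr
    exact dist_le_card_mul_maxE (hreach v)
  · have hdist : dist (m⁻¹ • (ρ u - ρ (root u))) (m⁻¹ • (ρ v - ρ (root v)))
        = dist (ρ u) (ρ v) / m := by
      rw [dist_eq_norm, ← smul_sub, hroot h, sub_sub_sub_cancel_right, norm_smul, norm_inv,
        Real.norm_of_nonneg hm.le, ← dist_eq_norm, inv_mul_eq_div]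
    rw [hdist, le_div_iff₀ hm, one_mul]
    exact ⟨minE_le_dist h, by gcongr; exact dist_le_maxE h⟩

lemma exists_ned [Finite V] (G : SimpleGraph V) : ∃ ρ : V → Pt, NED G ρ :=
  let f := (Finite.equivFin V).toEmbedding.trans
    (Fin.valEmbedding.trans (Infinite.natEmbedding Pt))
  ⟨f, fun _ _ h heq => G.ne_of_adj h (f.injective heq)⟩

lemma exists_ned_ratio_lt_dc_add [Finite V] {ε : ℝ} (hε : 0 < ε) :
    ∃ ρ : V → Pt, NED G ρ ∧ maxE G ρ / minE G ρ < dc G + ε := by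
  obtain ⟨ρ₀, hρ₀⟩ := exists_ned G
  have hne : {r | ∃ ρ : V → Pt, NED G ρ ∧ r = maxE G ρ / minE G ρ}.Nonempty :=
    ⟨_, ρ₀, hρ₀, rfl⟩
  obtain ⟨_, ⟨ρ, hρ, rfl⟩, hlt⟩ := Real.lt_sInf_add_pos hne hε
  exact ⟨ρ, hρ, hlt⟩

lemma dc_nonneg : 0 ≤ dc G :=
  Real.sInf_nonneg fun _ ⟨_, _, hr⟩ => hr ▸ div_nonneg maxE_nonneg minE_nonneg

lemma exists_edge_dist_mem_Icc_dc [Fintype V] (hE : G.edgeSet.Nonempty) :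
    ∃ τ : V → Pt, ∀ u v, G.Adj u v → 1 ≤ dist (τ u) (τ v) ∧ dist (τ u) (τ v) ≤ dc G := by
  let t : ℕ → Set (V → Pt) := fun n =>
    normalizedReps G (Fintype.card V * (dc G + 1)) (dc G + 1 / (n + 1))
  have ht : ∀ n, (t n).Nonempty := fun n => by
    obtain ⟨ρ, hρ, hlt⟩ := exists_ned_ratio_lt_dc_add (G := G) Nat.one_div_pos_of_nat
    have hle : dc G + 1 / (n + 1) ≤ dc G + 1 := by
      gcongr; exact div_le_one_of_le₀ (le_add_of_nonneg_left n.cast_nonneg) (by positivity)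
    exact (exists_mem_normalizedReps hρ hE).mono
      (normalizedReps_mono (by gcongr; exact hlt.le.trans hle) hlt.le)
  obtain ⟨τ, hτ⟩ := IsCompact.nonempty_iInter_of_sequence_nonempty_isCompact_isClosed t
    (fun n => normalizedReps_mono le_rfl (by gcongr; exact n.le_succ)) ht
    (isCompact_normalizedReps _ _) fun _ => isClosed_normalizedReps _ _
  rw [Set.mem_iInter] at hτ
  refine ⟨τ, fun u v h => ⟨((hτ 0).2 u v h).1, le_of_forall_pos_lt_add fun ε hε => ?_⟩⟩
  obtain ⟨n, hn⟩ := exists_nat_one_div_lt hε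
  exact ((hτ n).2 u v h).2.trans_lt (add_lt_add_right hn _)

end Normalization

section Grid

lemma abs_sub_lt_one_or_lt_abs_sub_of_floor_eq {n : ℕ} {x y : ℝ}
    (h : ((⌊x⌋ : ℤ) : ZMod n) = ⌊y⌋) : |x - y| < 1 ∨ (n : ℝ) - 1 < |x - y| := by
  rcases eq_or_ne ⌊x⌋ ⌊y⌋ with hxy | hxy
  · exact Or.inl (Int.abs_sub_lt_one_of_floor_eq_floor hxy)
  have hdvd : (n : ℤ) ∣ ⌊x⌋ - ⌊y⌋ :=
    dvd_sub_comm.1 ((ZMod.intCast_eq_intCast_iff_dvd_sub _ _ _).1 h)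
  have hn : (n : ℝ) ≤ |(⌊x⌋ : ℝ) - ⌊y⌋| := by
    exact_mod_cast Int.le_of_dvd (abs_pos.2 (sub_ne_zero.2 hxy)) ((dvd_abs _ _).2 hdvd)
  have := Int.floor_le x; have := Int.lt_floor_add_one x
  have := Int.floor_le y; have := Int.lt_floor_add_one y
  right
  rcases le_abs'.1 hn with h' | h' <;> rw [lt_abs] <;> [right; left] <;> linarith

lemma dist_eq_sqrt_sq_add_sq (p q : Pt) : dist p q = √((p 0 - q 0) ^ 2 + (p 1 - q 1) ^ 2) := by
  simp only [EuclideanSpace.dist_eq, Fin.sum_univ_two, Real.dist_eq, sq_abs]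

lemma dist_lt_sqrt_two_mul {p q : Pt} {s : ℝ} (h : ∀ i, |p i - q i| < s) :
    dist p q < √2 * s := by
  have hs : 0 ≤ s := (abs_nonneg _).trans (h 0).le
  rw [dist_eq_sqrt_sq_add_sq, ← Real.sqrt_sq hs, ← Real.sqrt_mul zero_le_two]
  refine Real.sqrt_lt_sqrt (by positivity) ?_
  have h0 := sq_lt_sq' (abs_lt.1 (h 0)).1 (abs_lt.1 (h 0)).2
  have h1 := sq_lt_sq' (abs_lt.1 (h 1)).1 (abs_lt.1 (h 1)).2
  linarith

lemma dist_le_sqrt_two_mul {p q : Pt} {s : ℝ} (h : ∀ i, |p i - q i| ≤ s) :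
    dist p q ≤ √2 * s := by
  have hs : 0 ≤ s := (abs_nonneg _).trans (h 0)
  rw [dist_eq_sqrt_sq_add_sq, ← Real.sqrt_sq hs, ← Real.sqrt_mul zero_le_two]
  refine Real.sqrt_le_sqrt ?_
  have h0 := sq_le_sq' (abs_le.1 (h 0)).1 (abs_le.1 (h 0)).2
  have h1 := sq_le_sq' (abs_le.1 (h 1)).1 (abs_le.1 (h 1)).2
  linarith

lemma abs_sub_le_dist (p q : Pt) (i : Fin 2) : |p i - q i| ≤ dist p q :=
  (Real.dist_eq _ _).symm.trans_le (PiLp.dist_apply_le p q i)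

noncomputable def gridColor (n : ℕ) (s : ℝ) (p : Pt) : ZMod n × ZMod n := (⌊p 0 / s⌋, ⌊p 1 / s⌋)

lemma dist_lt_or_lt_dist_of_gridColor_eq {n : ℕ} {s : ℝ} (hs : 0 < s) {p q : Pt}
    (h : gridColor n s p = gridColor n s q) : dist p q < √2 * s ∨ (n - 1) * s < dist p q := by
  have hcoord : ∀ i, |p i - q i| < s ∨ (n - 1) * s < |p i - q i| := fun i => by
    have hi : ((⌊p i / s⌋ : ℤ) : ZMod n) = ⌊q i / s⌋ := by
      fin_cases i
      exacts [congrArg Prod.fst h, congrArg Prod.snd h]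
    have := abs_sub_lt_one_or_lt_abs_sub_of_floor_eq hi
    rwa [← sub_div, abs_div, abs_of_pos hs, div_lt_one hs, lt_div_iff₀ hs] at this
  by_cases hall : ∀ i, |p i - q i| < s
  · exact Or.inl (dist_lt_sqrt_two_mul hall)
  · obtain ⟨i, hi⟩ := not_forall.1 hall
    exact Or.inr (((hcoord i).resolve_left hi).trans_le (abs_sub_le_dist p q i))

lemma nonempty_coloring_of_edge_dist {V : Type*} {G : SimpleGraph V} {ρ : V → Pt} {M : ℝ}
    {N : ℕ} (hρ : ∀ u v, G.Adj u v → 1 ≤ dist (ρ u) (ρ v) ∧ dist (ρ u) (ρ v) ≤ M)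
    (hM : √2 * M ≤ N) : Nonempty (G.Coloring (ZMod (N + 1) × ZMod (N + 1))) := by
  refine ⟨SimpleGraph.Coloring.mk (fun v => gridColor (N + 1) (√2)⁻¹ (ρ v)) fun {u v} h hc => ?_⟩
  have hs : 0 < √2 := by positivity
  rcases dist_lt_or_lt_dist_of_gridColor_eq (inv_pos.2 hs) hc with hlt | hlt
  · rw [mul_inv_cancel₀ hs.ne'] at hlt
    linarith [(hρ u v h).1]
  · push_cast at hlt
    rw [add_sub_cancel_right, ← div_eq_mul_inv, div_lt_iff₀' hs] at hlt
    have := mul_le_mul_of_nonneg_left (hρ u v h).2 hs.le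
    linarith

end Grid

section PlaneWidth

variable {V : Type*} {G : SimpleGraph V}

def gridPoint {n : ℕ} (c : ZMod n × ZMod n) : Pt := !₂[c.1.val, c.2.val]

lemma one_le_abs_natCast_sub {a b : ℕ} (h : a ≠ b) : 1 ≤ |(a : ℝ) - b| := by
  have : (1 : ℤ) ≤ |(a : ℤ) - b| := Int.one_le_abs (sub_ne_zero.2 (by exact_mod_cast h))
  exact_mod_cast this

lemma one_le_dist_gridPoint {n : ℕ} [NeZero n] {c c' : ZMod n × ZMod n} (h : c ≠ c') :
    1 ≤ dist (gridPoint c) (gridPoint c') := by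
  rcases not_and_or.1 (mt Prod.ext_iff.2 h) with h' | h'
  · exact (one_le_abs_natCast_sub ((ZMod.val_injective n).ne h')).trans
      (abs_sub_le_dist (gridPoint c) (gridPoint c') 0)
  · exact (one_le_abs_natCast_sub ((ZMod.val_injective n).ne h')).trans
      (abs_sub_le_dist (gridPoint c) (gridPoint c') 1)

lemma dist_gridPoint_le {n : ℕ} (c c' : ZMod (n + 1) × ZMod (n + 1)) :
    dist (gridPoint c) (gridPoint c') ≤ √2 * n := by
  have hval : ∀ z : ZMod (n + 1), (z.val : ℝ) ≤ n := fun z => by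
    exact_mod_cast Nat.lt_succ_iff.1 z.val_lt
  have hcoord : ∀ a b : ZMod (n + 1), |(a.val : ℝ) - b.val| ≤ n := fun a b =>
    abs_sub_le_iff.2 ⟨by linarith [hval a, (b.val.cast_nonneg : (0 : ℝ) ≤ _)],
      by linarith [hval b, (a.val.cast_nonneg : (0 : ℝ) ≤ _)]⟩
  refine dist_le_sqrt_two_mul fun i => ?_
  fin_cases i
  exacts [hcoord c.1 c'.1, hcoord c.2 c'.2]

lemma pw_le_maxP (hE : G.edgeSet.Nonempty) {σ : V → Pt}
    (hσ : ∀ u v, G.Adj u v → 1 ≤ dist (σ u) (σ v)) : pw G ≤ maxP σ := by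
  have hNED : NED G σ := fun u v h heq =>
    (hσ u v h).not_gt (by rw [heq, dist_self]; exact one_pos)
  have hmin : 1 ≤ minE G σ :=
    le_csInf (nonempty_setOf_edge_dist σ hE) fun _ ⟨u, v, h, hd⟩ => hd ▸ hσ u v h
  calc pw G ≤ maxP σ / minE G σ :=
        csInf_le ⟨0, fun _ ⟨_, _, hr⟩ => hr ▸ div_nonneg maxP_nonneg minE_nonneg⟩ ⟨σ, hNED, rfl⟩
    _ ≤ maxP σ := div_le_self maxP_nonneg hmin

lemma pw_le_of_coloring (hE : G.edgeSet.Nonempty) {n : ℕ}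
    (C : G.Coloring (ZMod (n + 1) × ZMod (n + 1))) : pw G ≤ √2 * n :=
  (pw_le_maxP hE fun _ _ h => one_le_dist_gridPoint (C.valid h)).trans
    (maxP_le (by positivity) fun _ _ => dist_gridPoint_le _ _)

end PlaneWidth

lemma nonempty_coloring_dc {V : Type*} [Fintype V] {G : SimpleGraph V}
    (hE : G.edgeSet.Nonempty) :
    Nonempty (G.Coloring (ZMod (⌈√2 * dc G⌉₊ + 1) × ZMod (⌈√2 * dc G⌉₊ + 1))) :=
  let ⟨_, hτ⟩ := exists_edge_dist_mem_Icc_dc hE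
  nonempty_coloring_of_edge_dist hτ (Nat.le_ceil _)

/-- There are constants `K, C > 0` with `pw G ≤ K · dc G + C` for every graph `G`;
moreover any graph with dilation coefficient `D` has chromatic number at most
`(⌈√2·D⌉ + 1)²`. -/
theorem stmt_19 :
    (∃ K : ℝ, 0 < K ∧ ∃ C : ℝ, 0 < C ∧
      ∀ (V : Type) [Fintype V] (G : SimpleGraph V),
        G.edgeSet.Nonempty → pw G ≤ K * dc G + C) ∧
    ∀ (V : Type) [Fintype V] (G : SimpleGraph V), G.edgeSet.Nonempty →
      G.chromaticNumber.toNat ≤ ((⌈Real.sqrt 2 * dc G⌉).toNat + 1) ^ 2 := by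
  refine ⟨⟨2, two_pos, 2, two_pos, fun V _ G hE => ?_⟩, fun V _ G hE => ?_⟩
  · obtain ⟨C⟩ := nonempty_coloring_dc hE
    have hceil := Nat.ceil_lt_add_one (mul_nonneg (sqrt_nonneg 2) (dc_nonneg (G := G)))
    have hsq : √2 * √2 = 2 := mul_self_sqrt zero_le_two
    calc pw G ≤ √2 * ⌈√2 * dc G⌉₊ := pw_le_of_coloring hE C
      _ ≤ √2 * (√2 * dc G + 1) := by gcongr
      _ ≤ 2 * dc G + 2 := by nlinarith [sqrt_nonneg 2, dc_nonneg (G := G)]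
  · obtain ⟨C⟩ := nonempty_coloring_dc hE
    rw [Int.ceil_toNat, sq, ← ZMod.card (⌈√2 * dc G⌉₊ + 1), ← Fintype.card_prod]
    exact ENat.toNat_le_of_le_natCast C.colorable.chromaticNumber_le
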